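/- Let G=(V,E) be a connected graph with at least two vertices and let r ≥ 1 and t ≥ 1 be integers. If v_0 w_0^{(0)}, v_0 w_1^{(0)}, …, v_0 w_{l_0}^{(0)}, v_1 w_0^{(1)}, …, v_1 w_{l_1}^{(1)}, …, v_r w_0^{(r)}, …, v_r w_{l_r}^{(r)} is a shortest path in the generalized Sierpiński graph S(G,t), where v_i ∈ V and w_j^{(i)} ∈ V^{t-1} for i ∈ {0,1,…,r} and j ∈ {0,1,…,l_i}, and consecutive groups have distinct first letters (v_i ≠ v_{i+1}), then v_0, v_1, …, v_r is a path in G. -/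

import Mathlib

/-- The generalized Sierpiński graph `S(G,t)` of a base graph `G`: vertices are words of
length `t` over the vertex set (encoded as `Fin t → V`); two words are adjacent iff they are
of the form `w x y^{d-1}` and `w y x^{d-1}` for some edge `{x,y}` of `G`. -/
def SierpinskiGraph {V : Type*} (G : SimpleGraph V) (t : ℕ) : SimpleGraph (Fin t → V) where
  Adj u v := ∃ i : Fin t, G.Adj (u i) (v i) ∧
      (∀ j : Fin t, j < i → u j = v j) ∧
      (∀ j : Fin t, i < j → u j = v i ∧ v j = u i)
  symm := by
    constructor
    rintro u v ⟨i, h1, h2, h3⟩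
    exact ⟨i, h1.symm, fun j hj => (h2 j hj).symm, fun j hj => ⟨(h3 j hj).2, (h3 j hj).1⟩⟩
  loopless := by
    constructor
    rintro u ⟨i, h1, -, -⟩
    exact G.loopless.irrefl _ h1

/-!
Consecutive first letters along a walk of `S(G,t)` are equal or adjacent in `G`, which gives the
chain property. A repeated letter `x` after collapsing repeats means that a subwalk `M` leaves the
block `x V^{t-1}` and returns to it. Every step between blocks is an edge `x y^{t-1} — y x^{t-1}`,
so following the tail and the constant word of the current first letter as two tokens in
`S(G,t-1)`, each crossing step moves neither token and only swaps them. With at least two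
crossings, the tails of the ends of `M` are joined in `S(G,t-1)` by a walk at least two steps
shorter than `M`; lifted into the block `x`, it contradicts minimality.
-/

open SimpleGraph

namespace List

variable {α β : Type*}

theorem exists_sublist_triple_of_isChain_ne {x : α} :
    ∀ {l : List α}, l.IsChain Ne → [x, x] <+ l → ∃ y, y ≠ x ∧ [x, y, x] <+ l
  | [], _, h => absurd h.length_le (by simp)
  | c :: l, hc, .cons _ h =>
    let ⟨y, hy, hsub⟩ := exists_sublist_triple_of_isChain_ne hc.tail h
    ⟨y, hy, hsub.cons c⟩
  | _ :: [], _, .cons_cons _ h => absurd h.length_le (by simp)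
  | _ :: c :: l, hc, .cons_cons _ h => by
    have hxc : x ≠ c := (isChain_cons_cons.1 hc).1
    have hx : x ∈ l := by simpa [hxc] using singleton_sublist.1 h
    exact ⟨c, hxc.symm, (singleton_sublist.2 hx).cons_cons c |>.cons_cons x⟩

theorem head?_destutter' (R : α → α → Prop) [DecidableRel R] (a : α) (l : List α) :
    (l.destutter' R a).head? = some a := by
  induction l generalizing a with
  | nil => simp
  | cons b l ih => by_cases h : R a b <;> simp [h, ih]

theorem isChain_destutter'_ne [DecidableEq α] {S : α → α → Prop} {a : α} {l : List α}
    (h : (a :: l).IsChain fun p q => p ≠ q → S p q) : (l.destutter' Ne a).IsChain S := by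
  induction l generalizing a with
  | nil => simp
  | cons b l ih =>
    obtain ⟨hab, hl⟩ := isChain_cons_cons.1 h
    by_cases hne : a ≠ b
    · rw [destutter'_cons_pos _ hne, isChain_cons]
      exact ⟨by simpa [head?_destutter'] using hab hne, ih hl⟩
    · obtain rfl : a = b := not_not.1 hne
      rw [destutter'_cons_neg _ hne]
      exact ih hl

theorem isChain_destutter_ne [DecidableEq α] {S : α → α → Prop} {l : List α}
    (h : l.IsChain fun p q => p ≠ q → S p q) : (l.destutter Ne).IsChain S := by
  cases l with
  | nil => simp
  | cons a l => rw [destutter_cons']; exact isChain_destutter'_ne h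

/-- If every fibre of `f` occupies a contiguous stretch of `l`, the sequence of values of `f`
along `l`, with repetitions collapsed, has no duplicates. -/
theorem nodup_destutter_ne_map [DecidableEq β] (f : α → β) {l : List α}
    (h : ∀ a b c, [a, b, c] <+ l → f a = f c → f b = f a) :
    ((l.map f).destutter Ne).Nodup := by
  refine nodup_iff_sublist.2 fun x hxx => ?_
  obtain ⟨y, hyx, hxyx⟩ := exists_sublist_triple_of_isChain_ne (isChain_destutter Ne _) hxx
  obtain ⟨_ | ⟨a, _ | ⟨b, _ | ⟨c, _ | _⟩⟩⟩, habc, hmap⟩ :=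
    sublist_map_iff.1 (hxyx.trans (destutter_sublist Ne _)) <;> simp at hmap
  obtain ⟨rfl, rfl, hc⟩ := hmap
  exact hyx (h a b c habc hc)

end List

namespace SimpleGraph.Walk

variable {V α : Type*} {G : SimpleGraph V} {u v w : V}

theorem exists_eq_append_of_sublist_support {x y : V} (q : G.Walk u v)
    (h : List.Sublist [x, y] q.support) :
    ∃ (M : G.Walk u y) (Q : G.Walk y v), q = M.append Q ∧ x ∈ M.support := by
  classical
  induction q with
  | nil => exact absurd h.length_le (by simp)
  | cons hadj q ih =>
    rw [support_cons] at h
    cases h with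
    | cons _ h =>
      obtain ⟨M, Q, rfl, hx⟩ := ih h
      exact ⟨cons hadj M, Q, rfl, by simp [hx]⟩
    | cons_cons _ h =>
      have hy : y ∈ q.support := List.singleton_sublist.1 h
      exact ⟨cons hadj (q.takeUntil y hy), q.dropUntil y hy, by rw [cons_append, take_spec],
        by simp⟩

theorem exists_isSubwalk_of_sublist_support {x y z : V} (p : G.Walk u v)
    (h : List.Sublist [x, y, z] p.support) : ∃ M : G.Walk x z, M.IsSubwalk p ∧ y ∈ M.support := by
  induction p with
  | nil => exact absurd h.length_le (by simp)
  | cons hadj q ih =>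
    rw [support_cons] at h
    cases h with
    | cons _ h =>
      obtain ⟨M, hM, hy⟩ := ih h
      exact ⟨M, hM.trans (q.isSubwalk_cons hadj), hy⟩
    | cons_cons _ h =>
      obtain ⟨M, Q, rfl, hy⟩ := exists_eq_append_of_sublist_support q h
      exact ⟨cons hadj M, ⟨nil, Q, rfl⟩, by simp [hy]⟩

section countChanges

variable [DecidableEq α] (f : V → α)

def countChanges (p : G.Walk u v) : ℕ :=
  p.darts.countP fun d => f d.fst ≠ f d.snd

@[simp]
theorem countChanges_nil : (nil : G.Walk u u).countChanges f = 0 := rfl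

@[simp]
theorem countChanges_cons (h : G.Adj u v) (p : G.Walk v w) :
    (cons h p).countChanges f = p.countChanges f + if f u = f v then 0 else 1 := by
  by_cases huv : f u = f v <;> simp [countChanges, huv]

theorem countChanges_append (p : G.Walk u v) (q : G.Walk v w) :
    (p.append q).countChanges f = p.countChanges f + q.countChanges f := by
  simp [countChanges, darts_append]

variable {f}

theorem one_le_countChanges (p : G.Walk u v) (h : f u ≠ f v) : 1 ≤ p.countChanges f := by
  induction p with
  | nil => exact absurd rfl h
  | @cons a b c hadj q ih =>
    by_cases hab : f a = f b
    · simpa [hab] using ih (hab ▸ h)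
    · simp [hab]

theorem two_le_countChanges (p : G.Walk u v) (huv : f u = f v) (hw : w ∈ p.support)
    (hfw : f w ≠ f u) : 2 ≤ p.countChanges f := by
  classical
  rw [← p.take_spec hw, countChanges_append]
  have h₁ := (p.takeUntil w hw).one_le_countChanges hfw.symm
  have h₂ := (p.dropUntil w hw).one_le_countChanges (huv ▸ hfw)
  omega

end countChanges

end SimpleGraph.Walk

namespace SierpinskiGraph

variable {V : Type*} {G : SimpleGraph V} {n : ℕ} {u v : Fin (n + 1) → V}

theorem head_eq_or_adj_of_adj (h : (SierpinskiGraph G (n + 1)).Adj u v) :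
    u 0 = v 0 ∨ G.Adj (u 0) (v 0) := by
  obtain ⟨i, hi, hlt, -⟩ := h
  rcases Fin.eq_zero_or_eq_succ i with rfl | ⟨k, rfl⟩
  · exact .inr hi
  · exact .inl (hlt 0 k.succ_pos)

theorem adj_tail_of_adj_of_head_eq (h : (SierpinskiGraph G (n + 1)).Adj u v) (h0 : u 0 = v 0) :
    (SierpinskiGraph G n).Adj (Fin.tail u) (Fin.tail v) := by
  obtain ⟨i, hi, hlt, hgt⟩ := h
  rcases Fin.eq_zero_or_eq_succ i with rfl | ⟨k, rfl⟩
  · exact absurd (h0 ▸ hi) (G.loopless.irrefl _)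
  · exact ⟨k, hi, fun j hj => hlt j.succ (Fin.succ_lt_succ_iff.2 hj),
      fun j hj => hgt j.succ (Fin.succ_lt_succ_iff.2 hj)⟩

theorem tail_eq_const_of_adj_of_head_ne (h : (SierpinskiGraph G (n + 1)).Adj u v)
    (h0 : u 0 ≠ v 0) : Fin.tail u = fun _ => v 0 := by
  obtain ⟨i, -, hlt, hgt⟩ := h
  rcases Fin.eq_zero_or_eq_succ i with rfl | ⟨k, rfl⟩
  · exact funext fun j => (hgt j.succ j.succ_pos).1
  · exact absurd (hlt 0 k.succ_pos) h0

variable (G) in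
def consHom (x : V) : SierpinskiGraph G n →g SierpinskiGraph G (n + 1) where
  toFun α := Fin.cons x α
  map_rel' := by
    rintro α β ⟨i, hi, hlt, hgt⟩
    refine ⟨i.succ, by simpa using hi, fun j hj => ?_, fun j hj => ?_⟩
    · rcases Fin.eq_zero_or_eq_succ j with rfl | ⟨k, rfl⟩
      · rfl
      · simpa using hlt k (Fin.succ_lt_succ_iff.1 hj)
    · rcases Fin.eq_zero_or_eq_succ j with rfl | ⟨k, rfl⟩
      · exact absurd hj (Fin.succ_pos i).not_gt
      · simpa using hgt k (Fin.succ_lt_succ_iff.1 hj)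

/-- Read a walk of `S(G,n+1)` as two tokens moving in `S(G,n)`, one on the constant word of the
current first letter and one on the current tail. A step inside a block moves the tail token;
a step between blocks moves nothing, but swaps the two tokens. -/
theorem exists_token_walks [DecidableEq V] (W : (SierpinskiGraph G (n + 1)).Walk u v) :
    ∃ (x y : Fin n → V) (A : (SierpinskiGraph G n).Walk (fun _ => u 0) x)
      (B : (SierpinskiGraph G n).Walk (Fin.tail u) y),
      (x = (fun _ => v 0) ∧ y = Fin.tail v ∨ x = Fin.tail v ∧ y = fun _ => v 0) ∧
      A.length + B.length + W.countChanges (· 0) ≤ W.length := by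
  induction W with
  | nil => exact ⟨_, _, .nil, .nil, .inl ⟨rfl, rfl⟩, by simp⟩
  | @cons a c d h W ih =>
    obtain ⟨x, y, A, B, hxy, hlen⟩ := ih
    by_cases h0 : a 0 = c 0
    · refine ⟨x, y, A.copy (by rw [h0]) rfl, .cons (adj_tail_of_adj_of_head_eq h h0) B, hxy, ?_⟩
      simp only [Walk.length_copy, Walk.length_cons, Walk.countChanges_cons, h0, ↓reduceIte]
      omega
    · refine ⟨y, x, B.copy (tail_eq_const_of_adj_of_head_ne h.symm (Ne.symm h0)) rfl,
        A.copy (tail_eq_const_of_adj_of_head_ne h h0).symm rfl, hxy.symm.imp And.symm And.symm, ?_⟩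
      simp only [Walk.length_copy, Walk.length_cons, Walk.countChanges_cons, h0, ↓reduceIte]
      omega

theorem exists_shorter_walk_of_mem_support (M : (SierpinskiGraph G (n + 1)).Walk u v)
    (huv : u 0 = v 0) {w : Fin (n + 1) → V} (hw : w ∈ M.support) (hw0 : w 0 ≠ u 0) :
    ∃ N : (SierpinskiGraph G (n + 1)).Walk u v, N.length + 2 ≤ M.length := by
  classical
  obtain ⟨x, y, A, B, hxy, hlen⟩ := exists_token_walks M
  have hcross := M.two_le_countChanges (f := (· 0)) huv hw hw0
  obtain ⟨R, hR⟩ : ∃ R : (SierpinskiGraph G n).Walk (Fin.tail u) (Fin.tail v),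
      R.length + 2 ≤ M.length := by
    rcases hxy with ⟨rfl, rfl⟩ | ⟨rfl, rfl⟩
    · exact ⟨B, by omega⟩
    · refine ⟨B.append (A.copy (by rw [huv]) rfl), ?_⟩
      simp only [Walk.length_append, Walk.length_copy]
      omega
  have hu : consHom G (u 0) (Fin.tail u) = u := Fin.cons_self_tail u
  have hv : consHom G (u 0) (Fin.tail v) = v := huv ▸ Fin.cons_self_tail v
  exact ⟨(R.map (consHom G (u 0))).copy hu hv, by
    rwa [Walk.length_copy, Walk.length_map]⟩

/-- On a shortest walk of `S(G,n+1)`, the words with a given first letter form one block. -/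
theorem head_eq_of_sublist_support {a b : Fin (n + 1) → V}
    (p : (SierpinskiGraph G (n + 1)).Walk a b)
    (hp : p.length = (SierpinskiGraph G (n + 1)).dist a b) {x y z : Fin (n + 1) → V}
    (hxyz : List.Sublist [x, y, z] p.support) (hxz : x 0 = z 0) : y 0 = x 0 := by
  obtain ⟨M, hM, hy⟩ := p.exists_isSubwalk_of_sublist_support hxyz
  by_contra hy0
  obtain ⟨N, hN⟩ := exists_shorter_walk_of_mem_support M hxz hy hy0
  have hM_dist : M.length = (SierpinskiGraph G (n + 1)).dist x z :=
    length_eq_dist_of_subwalk hp hM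
  have hN_dist := dist_le N
  omega

end SierpinskiGraph

theorem stmt_1_general {V : Type*} [DecidableEq V] (G : SimpleGraph V) (t : ℕ) (ht : 1 ≤ t)
    {a b : Fin t → V} (p : (SierpinskiGraph G t).Walk a b)
    (hmin : p.length = (SierpinskiGraph G t).dist a b) :
    (List.destutter Ne (p.support.map fun u => u ⟨0, ht⟩)).Chain' G.Adj ∧
      (List.destutter Ne (p.support.map fun u => u ⟨0, ht⟩)).Nodup := by
  obtain ⟨n, rfl⟩ : ∃ n, t = n + 1 := ⟨t - 1, by omega⟩
  refine ⟨List.isChain_destutter_ne ?_, List.nodup_destutter_ne_map _ fun x y z hxyz hxz =>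
    SierpinskiGraph.head_eq_of_sublist_support p hmin hxyz hxz⟩
  refine List.isChain_map_of_isChain _ (fun u v huv hne => ?_) p.isChain_adj_support
  exact (SierpinskiGraph.head_eq_or_adj_of_adj huv).resolve_left hne

/-- if `p` is a shortest path in `S(G,t)` and the sequence of first letters of
its vertices, with consecutive duplicates removed (i.e. the sequence `v_0, v_1, …, v_r` of
first letters of the maximal blocks), has at least two terms (`r ≥ 1`), then
`v_0, v_1, …, v_r` is a path in `G` (consecutive vertices adjacent, all vertices distinct). -/
theorem stmt_1 {V : Type*} [DecidableEq V] (G : SimpleGraph V) (hconn : G.Connected)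
    (hV : Nontrivial V) (t : ℕ) (ht : 1 ≤ t) {a b : Fin t → V}
    (p : (SierpinskiGraph G t).Walk a b) (hp : p.IsPath)
    (hmin : p.length = (SierpinskiGraph G t).dist a b)
    (hr : 2 ≤ (List.destutter Ne (p.support.map fun u => u ⟨0, ht⟩)).length) :
    (List.destutter Ne (p.support.map fun u => u ⟨0, ht⟩)).Chain' G.Adj ∧
      (List.destutter Ne (p.support.map fun u => u ⟨0, ht⟩)).Nodup :=
  stmt_1_general G t ht p hmin
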